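/- arXiv:2506.02687 — 5 statements merged into one kernel-verified Lean document; each statement's English description precedes it below -/
import Mathlib

section
/- Let G be a 2-connected finite simple graph on n ≥ 3 vertices. If max{d_G(x), d_G(y)} ≥ n/2 for every pair of vertices x, y with d_G(x, y) = 2, then G is hamiltonian. -/
open SimpleGraph

/-- The bipartite independence number of a finite simple graph `G`: the smallest `q : ℕ` for
which there exist positive integers `s` and `t` with `s + t = q + 1` such that for any two
disjoint vertex subsets `A`, `B` with `|A| = s` and `|B| = t` there is an edge between them. -/
noncomputable def bipIndepNum {V : Type*} [Fintype V] (G : SimpleGraph V) : ℕ :=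
  sInf {q : ℕ | ∃ s t : ℕ, 0 < s ∧ 0 < t ∧ s + t = q + 1 ∧
    ∀ A B : Finset V, Disjoint A B → A.card = s → B.card = t →
      ∃ a ∈ A, ∃ b ∈ B, G.Adj a b}

/-- A graph is `k`-connected if it has more than `k` vertices and deleting any set of fewer
than `k` vertices leaves a connected graph. -/
def KConnected {V : Type*} [Fintype V] [DecidableEq V] (k : ℕ) (G : SimpleGraph V) : Prop :=
  k < Fintype.card V ∧
    ∀ S : Finset V, S.card < k → (G.induce ((↑S : Set V)ᶜ)).Connected

/-- A graph is hamiltonian-connected if between any two distinct vertices there is a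
Hamilton path. -/
def HamiltonianConnected {V : Type*} [DecidableEq V] (G : SimpleGraph V) : Prop :=
  ∀ u v : V, u ≠ v → ∃ p : G.Walk u v, p.IsHamiltonian

/-- The join of two graphs. -/
def graphJoin {α β : Type*} (G : SimpleGraph α) (H : SimpleGraph β) :
    SimpleGraph (α ⊕ β) where
  Adj x y :=
    match x, y with
    | Sum.inl a, Sum.inl b => G.Adj a b
    | Sum.inr a, Sum.inr b => H.Adj a b
    | Sum.inl _, Sum.inr _ => True
    | Sum.inr _, Sum.inl _ => True
  symm := ⟨by rintro (a | a) (b | b) h <;> simp_all <;> exact h.symm⟩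
  loopless := ⟨by rintro (a | a) h <;> simp_all⟩

instance {α β : Type*} (G : SimpleGraph α) (H : SimpleGraph β)
    [DecidableRel G.Adj] [DecidableRel H.Adj] : DecidableRel (graphJoin G H).Adj
  | Sum.inl a, Sum.inl b => inferInstanceAs (Decidable (G.Adj a b))
  | Sum.inl _, Sum.inr _ => inferInstanceAs (Decidable True)
  | Sum.inr _, Sum.inl _ => inferInstanceAs (Decidable True)
  | Sum.inr a, Sum.inr b => inferInstanceAs (Decidable (H.Adj a b))

/-!
Take a longest path `v₀ … v_{p-1}` (encoded as `f : ℕ → V`) whose ends have maximal degree sum.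
If `G` is not hamiltonian, no longest path closes up to a cycle (connectivity would extend it), so
the classical crossing argument gives `d(v₀) + d(v_{p-1}) < p ≤ n`, and one end, say `v₀`, has
degree `a < n / 2`. A Pósa rotation at a chord `v₀ v_{j+1}` yields a longest path from `v_j` with
the same last vertex, so `d(v_j) ≤ a` by maximality; if `v₀ v_j` is not an edge, `v₀` and `v_j`
are at distance two, against Fan's condition. Hence the neighbours of the first vertex of any such
path are exactly its next `degree` vertices. Since `G - v_a` is connected, some `v_i` with
`1 ≤ i < a` is adjacent to some `v_m` with `m > a`; rotating at `v₀ v_{i+1}` and then at `v_i v_m`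
gives a longest path starting at `v_{m-1}` whose first vertex is adjacent to its `m`-th vertex,
although its degree is at most `a < m`.
-/

open Finset

lemma exists_max_image_of_forall_le {α : Type*} {P : α → Prop} (φ : α → ℕ) {B : ℕ}
    (hP : ∃ a, P a) (hB : ∀ a, P a → φ a ≤ B) : ∃ a, P a ∧ ∀ b, P b → φ b ≤ φ a := by
  classical
  obtain ⟨a, ha⟩ := hP
  obtain ⟨c, hc, hcm⟩ :=
    Nat.findGreatest_spec (P := fun m ↦ ∃ a, P a ∧ φ a = m) (hB a ha) ⟨a, ha, rfl⟩
  exact ⟨c, hc, fun b hb ↦ hcm ▸ Nat.le_findGreatest (hB b hb) ⟨b, hb, rfl⟩⟩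

lemma Finset.eq_Icc_one_card {T : Finset ℕ} (h0 : 0 ∉ T)
    (hdown : ∀ t, 1 ≤ t → t + 1 ∈ T → t ∈ T) : T = Icc 1 #T := by
  have hIcc : ∀ t ∈ T, Icc 1 t ⊆ T := by
    intro t ht
    induction t with
    | zero => simp
    | succ t ih =>
      intro s hs
      rw [mem_Icc] at hs
      rcases hs.2.eq_or_lt with rfl | hlt
      · exact ht
      · exact ih (hdown t (by omega) ht) (mem_Icc.2 ⟨hs.1, by omega⟩)
  refine eq_of_subset_of_card_le (fun t ht ↦ mem_Icc.2 ⟨?_, ?_⟩) (by simp)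
  · exact Nat.one_le_iff_ne_zero.2 (by rintro rfl; exact h0 ht)
  · simpa using card_le_card (hIcc t ht)

namespace SimpleGraph

variable {V : Type*} {G : SimpleGraph V}

lemma KConnected.connected [Fintype V] [DecidableEq V] {k : ℕ} (h : KConnected k G)
    (hk : 1 ≤ k) : G.Connected := by
  have := h.2 ∅ (by simp; omega)
  rw [Finset.coe_empty, Set.compl_empty] at this
  exact (induceUnivIso G).connected_iff.mp this

lemma KConnected.induce_compl_singleton_connected [Fintype V] [DecidableEq V] {k : ℕ}
    (h : KConnected k G) (hk : 2 ≤ k) (c : V) : (G.induce {c}ᶜ).Connected := by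
  have := h.2 {c} (by simp; omega)
  rwa [Finset.coe_singleton] at this

lemma Connected.exists_adj_of_mem_of_notMem (hG : G.Connected) {A : Set V} {x y : V}
    (hx : x ∈ A) (hy : y ∉ A) : ∃ u ∈ A, ∃ v ∉ A, G.Adj u v := by
  obtain ⟨w⟩ := hG.preconnected x y
  obtain ⟨d, -, hd₁, hd₂⟩ := w.exists_boundary_dart A hx hy
  exact ⟨_, hd₁, _, hd₂, d.adj⟩

lemma exists_adj_of_connected_induce_compl_singleton {c : V} (hc : (G.induce {c}ᶜ).Connected)
    {A : Set V} (hcA : c ∉ A) {x y : V} (hx : x ∈ A) (hy : y ∉ A) (hyc : y ≠ c) :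
    ∃ u ∈ A, ∃ v ∉ A, v ≠ c ∧ G.Adj u v := by
  obtain ⟨⟨u, _⟩, hu, ⟨v, hvc⟩, hv, huv⟩ := hc.exists_adj_of_mem_of_notMem
    (A := {v : ({c}ᶜ : Set V) | (v : V) ∈ A}) (x := ⟨x, by rintro rfl; exact hcA hx⟩)
    (y := ⟨y, hyc⟩) hx hy
  exact ⟨u, hu, v, hv, hvc, huv⟩

lemma dist_eq_two_of_adj_of_adj {x y z : V} (hxy : x ≠ y) (hn : ¬G.Adj x y) (hxz : G.Adj x z)
    (hzy : G.Adj z y) : G.dist x y = 2 := by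
  have : G.edist x y = 2 := edist_eq_two_iff.2 ⟨hxy, hn, z, hxz, hzy.symm⟩
  simp [dist, this]

/-- `f 0, f 1, …, f (k - 1)` are the vertices, in order, of a path of `G`; the values of `f`
from `k` on play no role. -/
structure IsPathSeq (G : SimpleGraph V) (f : ℕ → V) (k : ℕ) : Prop where
  adj : ∀ t, t + 1 < k → G.Adj (f t) (f (t + 1))
  injOn : Set.InjOn f (Set.Iio k)

def prefixRev (j t : ℕ) : ℕ := if t ≤ j then j - t else t

@[simp] lemma prefixRev_zero (j : ℕ) : prefixRev j 0 = j := by simp [prefixRev]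

lemma prefixRev_of_lt {j t : ℕ} (h : j < t) : prefixRev j t = t := by
  simp [prefixRev, Nat.not_le.mpr h]

namespace IsPathSeq

variable {f : ℕ → V} {k p : ℕ}

lemma adj_of_succ_eq (hf : IsPathSeq G f k) {s t : ℕ} (hs : s < k) (ht : t < k)
    (h : s + 1 = t ∨ t + 1 = s) : G.Adj (f s) (f t) := by
  rcases h with rfl | rfl
  · exact hf.adj s ht
  · exact (hf.adj t hs).symm

lemma apply_eq_apply_iff (hf : IsPathSeq G f k) {s t : ℕ} (hs : s < k) (ht : t < k) :
    f s = f t ↔ s = t :=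
  ⟨fun h ↦ hf.injOn hs ht h, congrArg f⟩

lemma apply_mem_image_iff (hf : IsPathSeq G f k) {s m : ℕ} (hs : s < k) (hm : m ≤ k) :
    f s ∈ f '' Set.Iio m ↔ s < m := by
  refine ⟨?_, fun h ↦ ⟨s, h, rfl⟩⟩
  rintro ⟨t, ht, h⟩
  rw [Set.mem_Iio] at ht
  rwa [← (hf.apply_eq_apply_iff (by omega) hs).1 h]

lemma comp (hf : IsPathSeq G f k) {σ : ℕ → ℕ} (hmaps : ∀ t < k, σ t < k)
    (hinj : Set.InjOn σ (Set.Iio k)) (hadj : ∀ t, t + 1 < k → G.Adj (f (σ t)) (f (σ (t + 1)))) :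
    IsPathSeq G (f ∘ σ) k where
  adj := hadj
  injOn s hs t ht hst := hinj hs ht (hf.injOn (hmaps s hs) (hmaps t ht) hst)

lemma reverse (hf : IsPathSeq G f k) : IsPathSeq G (fun t ↦ f (k - 1 - t)) k :=
  hf.comp (σ := fun t ↦ k - 1 - t) (fun t ht ↦ by omega)
    (fun s hs t ht h ↦ by simp only [Set.mem_Iio] at hs ht h; omega)
    (fun t ht ↦ hf.adj_of_succ_eq (by omega) (by omega) (by omega))

/-- Pósa's rotation: the new path starts at `f j` and ends where `f` does. -/
lemma rotate (hf : IsPathSeq G f k) {j : ℕ} (hj : j + 1 < k) (hchord : G.Adj (f 0) (f (j + 1))) :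
    IsPathSeq G (f ∘ prefixRev j) k := by
  refine hf.comp (fun t ht ↦ by unfold prefixRev; split_ifs <;> omega)
    (fun s hs t ht h ↦ by simp only [Set.mem_Iio, prefixRev] at hs ht h; split_ifs at h <;> omega)
    (fun t ht ↦ ?_)
  unfold prefixRev
  by_cases htj : t = j
  · subst htj
    simpa [Nat.sub_self] using hchord
  · split_ifs <;> exact hf.adj_of_succ_eq (by omega) (by omega) (by omega)

lemma cons (hf : IsPathSeq G f k) {z : V} (hz : ∀ t < k, f t ≠ z) (hadj : G.Adj z (f 0)) :
    IsPathSeq G (fun t ↦ if t = 0 then z else f (t - 1)) (k + 1) where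
  adj t ht := by
    rcases t with _ | t
    · simpa using hadj
    · simpa using hf.adj t (by omega)
  injOn s hs t ht h := by
    simp only [Set.mem_Iio] at hs ht
    rcases s with _ | s <;> rcases t with _ | t <;> simp only [↓reduceIte, Nat.add_one_ne_zero,
      Nat.add_sub_cancel] at h
    · rfl
    · exact absurd h.symm (hz t (by omega))
    · exact absurd h (hz s (by omega))
    · rw [hf.injOn (by simp; omega) (by simp; omega) h]

/-- The cycle closed by `hclose`, reopened to start at `f i`. -/
lemma rotateCycle (hf : IsPathSeq G f k) (hclose : G.Adj (f (k - 1)) (f 0)) {i : ℕ} (hi : i < k) :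
    IsPathSeq G (fun t ↦ f (if t ≤ i then i - t else k + i - t)) k := by
  refine hf.comp (σ := fun t ↦ if t ≤ i then i - t else k + i - t)
    (fun t ht ↦ by split_ifs <;> omega)
    (fun s hs t ht h ↦ by simp only [Set.mem_Iio] at hs ht h; split_ifs at h <;> omega)
    (fun t ht ↦ ?_)
  by_cases hti : t = i
  · subst hti
    simpa [Nat.sub_self, show k + t - (t + 1) = k - 1 by omega] using hclose.symm
  · split_ifs <;> exact hf.adj_of_succ_eq (by omega) (by omega) (by omega)

lemma exists_eq_of_adj (hlong : ∀ g k, IsPathSeq G g k → k ≤ p) (hf : IsPathSeq G f p) {z : V}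
    (hz : G.Adj (f 0) z) : ∃ t < p, f t = z := by
  by_contra! h
  have := hlong _ _ (hf.cons h hz.symm)
  omega

lemma exists_adj_across (hlong : ∀ g k, IsPathSeq G g k → k ≤ p) (hf : IsPathSeq G f p) {a : ℕ}
    (hcut : (G.induce {f a}ᶜ).Connected) (ha : 1 ≤ a) (hap : a + 1 < p)
    (hnbr : ∀ t < p, G.Adj (f 0) (f t) ↔ 1 ≤ t ∧ t ≤ a) :
    ∃ i m, 1 ≤ i ∧ i < a ∧ a < m ∧ m < p ∧ G.Adj (f i) (f m) := by
  obtain ⟨_, ⟨i, hia, rfl⟩, b, hbA, hba, hib⟩ := exists_adj_of_connected_induce_compl_singleton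
    hcut (A := f '' Set.Iio a) (x := f 0) (y := f (a + 1))
    (by rw [hf.apply_mem_image_iff (by omega) (by omega)]; omega)
    (by rw [hf.apply_mem_image_iff (by omega) (by omega)]; omega)
    (by rw [hf.apply_mem_image_iff (by omega) (by omega)]; omega)
    (by rw [Ne, hf.apply_eq_apply_iff (by omega) (by omega)]; omega)
  rw [Set.mem_Iio] at hia
  have hbeyond {m : ℕ} (hm : m < p) (hb : f m = b) : a < m := by
    subst hb
    rw [hf.apply_mem_image_iff hm (by omega)] at hbA
    rw [Ne, hf.apply_eq_apply_iff hm (by omega)] at hba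
    omega
  have hi1 : 1 ≤ i := by
    by_contra! hi0
    obtain rfl : i = 0 := by omega
    obtain ⟨m, hm, rfl⟩ := hf.exists_eq_of_adj hlong hib
    have := (hnbr m hm).1 hib
    have := hbeyond hm rfl
    omega
  -- By maximality `b` lies on the path rotated to start at `f i`, hence on `f`.
  have hg := hf.rotate (j := i) (by omega) ((hnbr (i + 1) (by omega)).2 ⟨by omega, by omega⟩)
  obtain ⟨m, hm, hgm⟩ := hg.exists_eq_of_adj hlong (z := b) hib
  have hmi : i < m := by
    by_contra! hmi
    simp only [Function.comp_apply, prefixRev, hmi, if_true] at hgm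
    exact hbA ⟨i - m, by simp; omega, hgm⟩
  simp only [Function.comp_apply, prefixRev_of_lt hmi] at hgm
  exact ⟨i, m, hi1, hia, hbeyond hm hgm, hm, hgm ▸ hib⟩

variable [Fintype V]

lemma le_card (hf : IsPathSeq G f k) : k ≤ Fintype.card V := by
  simpa using Finset.card_le_card_of_injOn f (s := range k) (t := univ) (by simp)
    (by simpa [Set.InjOn] using hf.injOn)

lemma degree_eq_card_filter [DecidableEq V] [DecidableRel G.Adj] (hf : IsPathSeq G f k) {x : V}
    (hx : ∀ z, G.Adj x z → ∃ t < k, f t = z) :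
    G.degree x = #{t ∈ range k | G.Adj x (f t)} := by
  have : G.neighborFinset x = image f {t ∈ range k | G.Adj x (f t)} := by
    ext z
    simp only [mem_neighborFinset, mem_image, mem_filter, mem_range]
    constructor
    · intro hz
      obtain ⟨t, ht, rfl⟩ := hx z hz
      exact ⟨t, ⟨ht, hz⟩, rfl⟩
    · rintro ⟨t, ⟨-, ht⟩, rfl⟩
      exact ht
  rw [← card_neighborFinset_eq_degree, this, card_image_of_injOn]
  intro s hs t ht
  exact hf.injOn (by simp_all) (by simp_all)

lemma isHamiltonian [DecidableEq V] (hf : IsPathSeq G f (Fintype.card V))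
    (hclose : G.Adj (f (Fintype.card V - 1)) (f 0)) (h3 : 3 ≤ Fintype.card V) :
    G.IsHamiltonian := by
  intro _
  set n := Fintype.card V
  set l := (List.range n).map f
  have hne : l ≠ [] := by simp [l]; omega
  have hchain : l.IsChain G.Adj := by
    rw [List.isChain_map, List.isChain_range]
    exact fun m hm ↦ hf.adj m (by omega)
  have hpath : (Walk.ofSupport l hne hchain).IsPath := by
    rw [Walk.isPath_def, Walk.support_ofSupport]
    exact List.nodup_range.map_on fun s hs t ht h ↦
      hf.injOn (by simpa using hs) (by simpa using ht) h
  have hclose' : G.Adj (l.getLast hne) (l.head hne) := by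
    simpa [l, List.getLast_map, List.head_map] using hclose
  refine ⟨_, .cons hclose' (Walk.ofSupport l hne hchain), ?_⟩
  rw [Walk.isHamiltonianCycle_iff_isCycle_and_length_eq,
    Walk.isCycle_iff_isPath_tail_and_le_length]
  simp [hpath, l]
  omega

lemma not_adj_last_zero [DecidableEq V] (hlong : ∀ g k, IsPathSeq G g k → k ≤ p)
    (hG : G.Connected) (hham : ¬G.IsHamiltonian) (h3 : 3 ≤ Fintype.card V)
    (hf : IsPathSeq G f p) : ¬G.Adj (f (p - 1)) (f 0) := by
  intro hclose
  have hp : 0 < p := Nat.pos_of_ne_zero (by rintro rfl; exact G.irrefl hclose)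
  obtain hpn | hpn := hf.le_card.eq_or_lt
  · subst hpn
    exact hham (hf.isHamiltonian hclose h3)
  obtain ⟨z, hz⟩ : ∃ z, z ∉ f '' Set.Iio p := by
    by_contra! h
    have : univ ⊆ (range p).image f := fun z _ ↦ by simpa using h z
    have := (card_le_card this).trans card_image_le
    simp at this
    omega
  obtain ⟨_, ⟨i, hi, rfl⟩, b, hb, hadj⟩ := hG.exists_adj_of_mem_of_notMem
    (Set.mem_image_of_mem f (Set.mem_Iio.2 hp)) hz
  rw [Set.mem_Iio] at hi
  have := hlong _ _ ((hf.rotateCycle hclose hi).cons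
    (fun t ht h ↦ hb ⟨_, by split_ifs <;> simp <;> omega, h⟩) (by simpa using hadj.symm))
  omega

variable [DecidableEq V] [DecidableRel G.Adj]

lemma degree_add_degree_le (hlong : ∀ g k, IsPathSeq G g k → k ≤ p)
    (hnoclose : ∀ g, IsPathSeq G g p → ¬G.Adj (g (p - 1)) (g 0)) (hf : IsPathSeq G f p) :
    G.degree (f 0) + G.degree (f (p - 1)) ≤ p - 1 := by
  set S := {t ∈ range p | G.Adj (f 0) (f t)}
  set T := {t ∈ range p | G.Adj (f (p - 1)) (f t)}
  have hS : G.degree (f 0) = #S := hf.degree_eq_card_filter fun _ ↦ hf.exists_eq_of_adj hlong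
  have hT : G.degree (f (p - 1)) = #T := hf.degree_eq_card_filter fun z hz ↦ by
    obtain ⟨t, ht, rfl⟩ := hf.reverse.exists_eq_of_adj hlong (by simpa using hz)
    exact ⟨p - 1 - t, by omega, rfl⟩
  have hSsub : S ⊆ Ico 1 p := fun t ht ↦ by
    simp only [S, mem_filter, mem_range, mem_Ico] at ht ⊢
    refine ⟨Nat.one_le_iff_ne_zero.2 ?_, ht.1⟩
    rintro rfl
    exact G.irrefl ht.2
  have hTsub : T.map (addRightEmbedding 1) ⊆ Ico 1 p := fun t ht ↦ by
    simp only [T, mem_map, mem_filter, mem_range, addRightEmbedding_apply, mem_Ico] at ht ⊢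
    obtain ⟨s, ⟨hs, hadj⟩, rfl⟩ := ht
    have : s ≠ p - 1 := by rintro rfl; exact G.irrefl hadj
    omega
  -- A vertex adjacent to `f 0` right after one adjacent to `f (p - 1)` would close a cycle.
  have hdisj : Disjoint S (T.map (addRightEmbedding 1)) := by
    rw [Finset.disjoint_left]
    intro t htS htT
    simp only [S, T, mem_map, mem_filter, mem_range, addRightEmbedding_apply] at htS htT
    obtain ⟨s, ⟨hs, hadj⟩, rfl⟩ := htT
    refine hnoclose _ (hf.rotate htS.1 htS.2) ?_
    simpa [prefixRev_of_lt (show s < p - 1 by omega)] using hadj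
  have := card_le_card (union_subset hSsub hTsub)
  rw [card_union_of_disjoint hdisj, card_map, Nat.card_Ico] at this
  omega

/-- A gap among the neighbours of `f 0` along the path would be rotated to the front, at distance
two from `f 0`, with both degrees `< n / 2`. -/
lemma adj_zero_iff (hlong : ∀ g k, IsPathSeq G g k → k ≤ p)
    (hfan : ∀ x y, G.dist x y = 2 → Fintype.card V ≤ 2 * max (G.degree x) (G.degree y))
    {w : V} (hlow : ∀ g, IsPathSeq G g p → g (p - 1) = w → 2 * G.degree (g 0) < Fintype.card V)
    (hf : IsPathSeq G f p) (hw : f (p - 1) = w) {t : ℕ} (ht : t < p) :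
    G.Adj (f 0) (f t) ↔ 1 ≤ t ∧ t ≤ G.degree (f 0) := by
  set T := {t ∈ range p | G.Adj (f 0) (f t)}
  have hdown : ∀ j, 1 ≤ j → j + 1 ∈ T → j ∈ T := by
    intro j hj hj1
    simp only [T, mem_filter, mem_range] at hj1 ⊢
    refine ⟨by omega, ?_⟩
    by_contra hnadj
    have hne : f 0 ≠ f j := by rw [Ne, hf.apply_eq_apply_iff (by omega) (by omega)]; omega
    have h₁ := hfan _ _ (dist_eq_two_of_adj_of_adj hne hnadj hj1.2 (hf.adj j hj1.1).symm)
    have h₂ := hlow f hf hw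
    have h₃ : 2 * G.degree (f j) < Fintype.card V := hlow _ (hf.rotate hj1.1 hj1.2)
      (by simpa [prefixRev_of_lt (show j < p - 1 by omega)])
    omega
  have hT : T = Icc 1 #T := eq_Icc_one_card (by simp [T]) hdown
  have hmem : G.Adj (f 0) (f t) ↔ t ∈ T := by simp [T, ht]
  rw [hmem, hT, mem_Icc, hf.degree_eq_card_filter fun _ ↦ hf.exists_eq_of_adj hlong]

lemma card_le_two_mul_degree (hlong : ∀ g k, IsPathSeq G g k → k ≤ p)
    (hnoclose : ∀ g, IsPathSeq G g p → ¬G.Adj (g (p - 1)) (g 0))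
    (hcut : ∀ c : V, (G.induce {c}ᶜ).Connected) (hpos : ∀ v, 0 < G.degree v)
    (hfan : ∀ x y, G.dist x y = 2 → Fintype.card V ≤ 2 * max (G.degree x) (G.degree y))
    (hf : IsPathSeq G f p)
    (hmax : ∀ g, IsPathSeq G g p → g (p - 1) = f (p - 1) → G.degree (g 0) ≤ G.degree (f 0)) :
    Fintype.card V ≤ 2 * G.degree (f 0) := by
  by_contra! hsmall
  set a := G.degree (f 0)
  have hnbr {g : ℕ → V} (hg : IsPathSeq G g p) (hgw : g (p - 1) = f (p - 1)) {t : ℕ}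
      (ht : t < p) : G.Adj (g 0) (g t) ↔ 1 ≤ t ∧ t ≤ G.degree (g 0) :=
    adj_zero_iff hlong hfan (fun g' hg' hw ↦ by linarith [hmax g' hg' hw]) hg hgw ht
  have hap : a + 2 ≤ p := by
    have := hf.degree_add_degree_le hlong hnoclose
    have := hpos (f (p - 1))
    omega
  obtain ⟨i, m, hi1, hia, ham, hm, hadj⟩ :=
    hf.exists_adj_across hlong (hcut (f a)) (hpos (f 0)) (by omega) fun t ↦ hnbr hf rfl
  set g := f ∘ prefixRev i
  have hg : IsPathSeq G g p :=
    hf.rotate (by omega) ((hnbr hf rfl (by omega)).2 ⟨by omega, by omega⟩)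
  have hgw : g (p - 1) = f (p - 1) := by simp [g, prefixRev_of_lt (show i < p - 1 by omega)]
  have hmp : m + 1 < p := by
    by_contra! hmp
    refine hnoclose g hg ?_
    rw [hgw, show p - 1 = m by omega]
    simpa [g] using hadj.symm
  -- Rotating `g` at the chord from `g 0 = f i` to `f m` puts `f (m - 1)`, of degree
  -- at most `a`, in front; yet it is adjacent to `f m`, the `m`-th vertex, and `m > a`.
  have hchord : G.Adj (g 0) (g (m - 1 + 1)) := by
    rw [Nat.sub_add_cancel (show 1 ≤ m by omega)]
    simpa [g, prefixRev_of_lt (show i < m by omega)] using hadj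
  set q := g ∘ prefixRev (m - 1)
  have hq : IsPathSeq G q p := hg.rotate (by omega) hchord
  have hqw : q (p - 1) = f (p - 1) := by
    simp [q, prefixRev_of_lt (show m - 1 < p - 1 by omega), ← hgw]
  have h₁ := (hnbr hq hqw hm).1 (by
    simpa [q, g, prefixRev_of_lt (show i < m by omega), prefixRev_of_lt (show i < m - 1 by omega),
      prefixRev_of_lt (show m - 1 < m by omega), Nat.sub_add_cancel (show 1 ≤ m by omega)] using
      hf.adj (m - 1) (by omega))
  have h₂ := hmax q hq hqw
  omega

end IsPathSeq

lemma exists_isPathSeq_longest_max_degree_add [Fintype V] [DecidableRel G.Adj] [Nonempty V] :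
    ∃ p f, (∀ g k, IsPathSeq G g k → k ≤ p) ∧ IsPathSeq G f p ∧ ∀ g, IsPathSeq G g p →
      G.degree (g 0) + G.degree (g (p - 1)) ≤ G.degree (f 0) + G.degree (f (p - 1)) := by
  obtain ⟨⟨f, p⟩, hf, hlong⟩ :=
    exists_max_image_of_forall_le (P := fun x : (ℕ → V) × ℕ ↦ IsPathSeq G x.1 x.2) Prod.snd
      ⟨(fun _ ↦ Classical.arbitrary V, 0), by constructor <;> simp⟩ fun x hx ↦ hx.le_card
  obtain ⟨f, hf, hmax⟩ := exists_max_image_of_forall_le (P := fun f ↦ IsPathSeq G f p)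
    (fun f ↦ G.degree (f 0) + G.degree (f (p - 1))) ⟨f, hf⟩
    fun f _ ↦ add_le_add (G.degree_lt_card_verts _).le (G.degree_lt_card_verts _).le
  exact ⟨p, f, fun g k hg ↦ hlong (g, k) hg, hf, hmax⟩

end SimpleGraph

theorem stmt_0_general {V : Type*} [Fintype V] [DecidableEq V] (G : SimpleGraph V) [DecidableRel G.Adj]
    (hconn : KConnected 2 G)
    (hdeg : ∀ x y : V, G.dist x y = 2 →
      (Fintype.card V : ℝ) / 2 ≤ ((max (G.degree x) (G.degree y) : ℕ) : ℝ)) :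
    G.IsHamiltonian := by
  by_contra hham
  have h3 : 3 ≤ Fintype.card V := hconn.1
  have : Nontrivial V := Fintype.one_lt_card_iff_nontrivial.1 (by omega)
  have hG := hconn.connected one_le_two
  have hfan x y (h : G.dist x y = 2) : Fintype.card V ≤ 2 * max (G.degree x) (G.degree y) := by
    have := hdeg x y h
    exact_mod_cast (show (Fintype.card V : ℝ) ≤ ((2 * max _ _ : ℕ) : ℝ) by
      push_cast at this ⊢; linarith)
  obtain ⟨p, f, hlong, hf, hmax⟩ := exists_isPathSeq_longest_max_degree_add (G := G)
  have hnoclose g (hg : IsPathSeq G g p) := hg.not_adj_last_zero hlong hG hham h3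
  have hend g (hg : IsPathSeq G g p)
      (hsum : G.degree (g 0) + G.degree (g (p - 1)) = G.degree (f 0) + G.degree (f (p - 1))) :
      Fintype.card V ≤ 2 * G.degree (g 0) :=
    hg.card_le_two_mul_degree hlong hnoclose (hconn.induce_compl_singleton_connected le_rfl)
      (hG.preconnected.degree_pos_of_nontrivial ·) hfan fun g' hg' hw ↦ by
        have := hmax g' hg'
        have := congrArg (G.degree ·) hw
        omega
  have h₁ := hend f hf rfl
  have h₂ : Fintype.card V ≤ 2 * G.degree (f (p - 1)) :=
    hend _ hf.reverse (by rw [Nat.sub_zero, Nat.sub_self, add_comm])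
  have := hf.degree_add_degree_le hlong hnoclose
  have := hf.le_card
  omega

/-- Fan 1984: a 2-connected graph on `n ≥ 3` vertices in which every pair of vertices at
distance two has a vertex of degree at least `n / 2` is hamiltonian. -/
theorem stmt_0 {V : Type*} [Fintype V] [DecidableEq V] (G : SimpleGraph V) [DecidableRel G.Adj]
    (hcard : 3 ≤ Fintype.card V) (hconn : KConnected 2 G)
    (hdeg : ∀ x y : V, G.dist x y = 2 →
      (Fintype.card V : ℝ) / 2 ≤ ((max (G.degree x) (G.degree y) : ℕ) : ℝ)) :
    G.IsHamiltonian :=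
  stmt_0_general G hconn hdeg
end

section
/- Let G be a finite simple graph on at least 3 vertices. If the minimum degree of G satisfies δ(G) ≥ α̃(G), where α̃(G) is the bipartite independence number of G, then G is hamiltonian. -/
/-!
Let `(s, t)` realise `α̃(G)`, so that `s + t ≤ δ + 1` and any disjoint `s`- and `t`-sets are joined
by an edge, and let `C` be a longest cycle; the longest-path argument shows that `C` has more than
`δ` vertices. Suppose a vertex `v` lies off `C`. Let `H` be the component of `v` in `G - C`, `N` its
neighbourhood (which lies on `C`) and `Y` the set of successors on `C` of the vertices of `N`. If a
vertex of `Y` had a neighbour in `H`, or two vertices of `Y` were adjacent, one could reroute `C`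
through `H` and obtain a longer cycle. Since `|H| + |N| > δ` and `|Y| = |N|`, either `|N| ≥ s`, and
an `s`-subset of `Y` has no edge to the rest of `Y ∪ H`, or `|N| < s ≤ t`, and `H` has no edge to
the more than `t` vertices of `C \ N`. Both contradict the choice of `(s, t)`.
-/

open SimpleGraph

namespace List

theorem exists_forall_length_le {α : Type*} [Fintype α] {p : List α → Prop} (hne : ∃ l, p l)
    (hnd : ∀ l, p l → l.Nodup) : ∃ l, p l ∧ ∀ l', p l' → l'.length ≤ l.length :=
  Set.exists_max_image _ length
    ((finite_length_le α (Fintype.card α)).subset fun l hl => (hnd l hl).length_le_card) hne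

variable {α : Type*} [DecidableEq α] {l : List α} {x : α}

theorem formPerm_apply_append_cons_cons {P R : List α} {z : α} (h : (P ++ x :: z :: R).Nodup) :
    formPerm (P ++ x :: z :: R) x = z := by
  rw [formPerm_eq_of_isRotated h isRotated_append]
  exact formPerm_apply_head _ _ _ (isRotated_append.nodup_iff.1 h)

theorem exists_isRotated_head?_formPerm (hl : l.Nodup) (hx : x ∈ l) :
    ∃ S, l ~r S ∧ S.head? = some (l.formPerm x) ∧ S.getLast? = some x := by
  obtain ⟨s, t, rfl⟩ := append_of_mem hx
  have hrot : s ++ x :: t ~r (t ++ s) ++ [x] :=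
    isRotated_append.trans (isRotated_append (l := [x]) (l' := t ++ s))
  rw [formPerm_eq_of_isRotated hl hrot]
  rcases h : t ++ s with _ | ⟨z, m⟩
  · rw [h, nil_append] at hrot
    exact ⟨[x], hrot, by simp, rfl⟩
  · rw [h, cons_append] at hrot
    refine ⟨z :: (m ++ [x]), hrot, ?_, getLast?_eq_some_iff.2 ⟨z :: m, rfl⟩⟩
    rw [cons_append, formPerm_cons_concat_apply_last]
    rfl

theorem exists_isRotated_append_head?_formPerm {x₁ x₂ : α} (hl : l.Nodup) (hx₁ : x₁ ∈ l)
    (hx₂ : x₂ ∈ l) (hne : x₁ ≠ x₂) :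
    ∃ S₁ S₂, l ~r S₁ ++ S₂ ∧ S₁.head? = some (l.formPerm x₁) ∧ S₁.getLast? = some x₂ ∧
      S₂.head? = some (l.formPerm x₂) ∧ S₂.getLast? = some x₁ := by
  obtain ⟨S, hS, hhead, hlast⟩ := exists_isRotated_head?_formPerm hl hx₁
  obtain ⟨T, rfl⟩ := getLast?_eq_some_iff.1 hlast
  have hx₂T : x₂ ∈ T := by simpa [hne.symm] using hS.mem_iff.1 hx₂
  obtain ⟨P, Q, rfl⟩ := append_of_mem hx₂T
  obtain ⟨z, R, hQ⟩ := exists_cons_of_ne_nil (append_ne_nil_of_right_ne_nil Q (cons_ne_nil x₁ []))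
  refine ⟨P ++ [x₂], Q ++ [x₁], by simpa using hS, by simpa [head?_append] using hhead, by simp,
    ?_, by simp⟩
  have hnd : (P ++ x₂ :: z :: R).Nodup := by
    rw [← hQ]
    simpa using hS.nodup_iff.1 hl
  rw [hQ, formPerm_eq_of_isRotated hl (by simpa [hQ] using hS), formPerm_apply_append_cons_cons hnd]
  rfl

end List

namespace Cycle

theorem chain_coe_iff {α : Type*} {r : α → α → Prop} {l : List α} :
    Cycle.Chain r l ↔ l.IsChain r ∧ ∀ a ∈ l.getLast?, ∀ b ∈ l.head?, r a b := by
  rcases l with _ | ⟨a, m⟩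
  · simp
  · rw [chain_coe_cons, ← List.cons_append, List.isChain_append]
    simp

end Cycle

namespace SimpleGraph

open Finset

variable {V : Type*} {G : SimpleGraph V} {s t : ℕ}

def HasCrossEdges (G : SimpleGraph V) (s t : ℕ) : Prop :=
  ∀ A B : Finset V, Disjoint A B → #A = s → #B = t → ∃ a ∈ A, ∃ b ∈ B, G.Adj a b

theorem HasCrossEdges.symm (h : G.HasCrossEdges s t) : G.HasCrossEdges t s := by
  intro A B hAB hA hB
  obtain ⟨b, hb, a, ha, hba⟩ := h B A hAB.symm hB hA
  exact ⟨a, ha, b, hb, hba.symm⟩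

theorem HasCrossEdges.exists_adj_of_le_card (h : G.HasCrossEdges s t) {A B : Finset V}
    (hAB : Disjoint A B) (hA : s ≤ #A) (hB : t ≤ #B) : ∃ a ∈ A, ∃ b ∈ B, G.Adj a b := by
  obtain ⟨A', hA'A, hA'⟩ := exists_subset_card_eq hA
  obtain ⟨B', hB'B, hB'⟩ := exists_subset_card_eq hB
  obtain ⟨a, ha, b, hb, hab⟩ := h A' B' (hAB.mono hA'A hB'B) hA' hB'
  exact ⟨a, hA'A ha, b, hB'B hb, hab⟩

theorem HasCrossEdges.exists_adj_of_subset [DecidableEq V] (h : G.HasCrossEdges s t)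
    {Y Z : Finset V} (hYZ : Y ⊆ Z) (hs : s ≤ #Y) (hst : s + t ≤ #Z) :
    ∃ y ∈ Y, ∃ z ∈ Z, G.Adj y z := by
  obtain ⟨A, hAY, hA⟩ := exists_subset_card_eq hs
  obtain ⟨a, ha, b, hb, hab⟩ := h.exists_adj_of_le_card (B := Z \ A) disjoint_sdiff
    hA.ge (by rw [card_sdiff_of_subset (hAY.trans hYZ)]; omega)
  exact ⟨a, hAY ha, b, sdiff_subset hb, hab⟩

theorem HasCrossEdges.adj_of_ne (h : G.HasCrossEdges 1 1) {a b : V} (hab : a ≠ b) :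
    G.Adj a b := by
  obtain ⟨x, hx, y, hy, hxy⟩ := h {a} {b} (disjoint_singleton.2 hab) rfl rfl
  rw [mem_singleton] at hx hy
  exact hx ▸ hy ▸ hxy

theorem exists_hasCrossEdges_of_bipIndepNum [Fintype V] (G : SimpleGraph V) :
    ∃ s t, 0 < s ∧ 0 < t ∧ s + t = bipIndepNum G + 1 ∧ G.HasCrossEdges s t :=
  Nat.sInf_mem (s := {q | ∃ s t, 0 < s ∧ 0 < t ∧ s + t = q + 1 ∧ G.HasCrossEdges s t})
    ⟨_, Fintype.card V + 1, 1, by omega, one_pos, rfl,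
      fun A _ _ hA _ => absurd (card_le_univ A) (by omega)⟩

theorem HasCrossEdges.two_le_minDegree [Fintype V] [DecidableRel G.Adj]
    (h : G.HasCrossEdges s t) (hs : 0 < s) (ht : 0 < t) (hst : s + t ≤ G.minDegree + 1)
    (hV : 3 ≤ Fintype.card V) : 2 ≤ G.minDegree := by
  by_cases h3 : 3 ≤ s + t
  · omega
  obtain ⟨rfl, rfl⟩ : s = 1 ∧ t = 1 := by omega
  have hG : G = ⊤ := by
    ext a b
    exact ⟨Adj.ne, h.adj_of_ne⟩
  have : G.minDegree = Fintype.card V - 1 := by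
    subst hG
    convert @minDegree_top V _ (Classical.decEq V)
  omega

/-- A cycle, listed in cyclic order; `l.formPerm` is then its successor map. -/
structure IsCycleList (G : SimpleGraph V) (l : List V) : Prop where
  three_le_length : 3 ≤ l.length
  nodup : l.Nodup
  chain : Cycle.Chain G.Adj l

structure IsLongestCycleList (G : SimpleGraph V) (l : List V) : Prop where
  isCycleList : G.IsCycleList l
  length_le {l' : List V} : G.IsCycleList l' → l'.length ≤ l.length

theorem IsCycleList.of_isChain {l : List V} (hlen : 3 ≤ l.length) (hnd : l.Nodup)
    (hch : l.IsChain G.Adj) (hclose : ∀ a ∈ l.getLast?, ∀ b ∈ l.head?, G.Adj a b) :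
    G.IsCycleList l :=
  ⟨hlen, hnd, Cycle.chain_coe_iff.2 ⟨hch, hclose⟩⟩

theorem IsCycleList.isChain {l : List V} (h : G.IsCycleList l) : l.IsChain G.Adj :=
  (Cycle.chain_coe_iff.1 h.chain).1

theorem IsCycleList.isRotated {l l' : List V} (h : G.IsCycleList l) (hl : l ~r l') :
    G.IsCycleList l' :=
  ⟨hl.perm.length_eq ▸ h.three_le_length, hl.nodup_iff.1 h.nodup,
    Cycle.coe_eq_coe.2 hl ▸ h.chain⟩

theorem Walk.head?_support {a b : V} (p : G.Walk a b) : p.support.head? = some a := by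
  rw [← p.cons_tail_support]
  rfl

theorem Walk.getLast?_support {a b : V} (p : G.Walk a b) : p.support.getLast? = some b := by
  rw [List.getLast?_eq_some_getLast p.support_ne_nil, p.getLast_support]

section Rerouting

variable [DecidableEq V] {C : List V}

theorem IsLongestCycleList.not_adj_formPerm (hC : G.IsLongestCycleList C) {x a b : V} (hx : x ∈ C)
    (p : G.Walk a b) (hp : p.IsPath) (hpC : ∀ w ∈ p.support, w ∉ C) (hxa : G.Adj x a) :
    ¬ G.Adj b (C.formPerm x) := by
  intro hb
  obtain ⟨S, hCS, hhead, hlast⟩ := List.exists_isRotated_head?_formPerm hC.isCycleList.nodup hx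
  have hS := hC.isCycleList.isRotated hCS
  have hcyc : G.IsCycleList (S ++ p.support) := by
    refine IsCycleList.of_isChain ?_ ?_ ?_ ?_
    · have := hS.three_le_length
      simp only [List.length_append]
      omega
    · exact hS.nodup.append hp.support_nodup fun w hwS hwp => hpC w hwp (hCS.mem_iff.2 hwS)
    · exact hS.isChain.append p.isChain_adj_support (by simp [hlast, p.head?_support, hxa])
    · simp [hhead, p.getLast?_support, List.getLast?_append, List.head?_append, hb]
  have := hC.length_le hcyc
  simp [hCS.perm.length_eq] at this

theorem IsLongestCycleList.not_formPerm_adj_formPerm (hC : G.IsLongestCycleList C)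
    {x₁ x₂ a b : V} (hx₁ : x₁ ∈ C) (hx₂ : x₂ ∈ C) (hne : x₁ ≠ x₂) (p : G.Walk a b)
    (hp : p.IsPath) (hpC : ∀ w ∈ p.support, w ∉ C) (hx₂a : G.Adj x₂ a) (hbx₁ : G.Adj b x₁) :
    ¬ G.Adj (C.formPerm x₁) (C.formPerm x₂) := by
  intro hσ
  -- The longer cycle runs along `S₁` from `C.formPerm x₁` to `x₂`, through `p`, and back along
  -- `S₂` from `x₁` to `C.formPerm x₂`.
  obtain ⟨S₁, S₂, hCS, h₁h, h₁l, h₂h, h₂l⟩ :=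
    List.exists_isRotated_append_head?_formPerm hC.isCycleList.nodup hx₁ hx₂ hne
  have hS := hC.isCycleList.isRotated hCS
  obtain ⟨hch₁, hch₂, -⟩ := List.isChain_append.1 hS.isChain
  have hperm : (S₁ ++ (p.support ++ S₂.reverse)).Perm (S₁ ++ S₂ ++ p.support) := by
    rw [List.append_assoc]
    exact (List.perm_append_comm.trans ((List.reverse_perm S₂).append_right _)).append_left S₁
  have hcyc : G.IsCycleList (S₁ ++ (p.support ++ S₂.reverse)) := by
    refine IsCycleList.of_isChain ?_ ?_ ?_ ?_
    · have := hS.three_le_length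
      simp only [List.length_append, List.length_reverse] at this ⊢
      omega
    · exact hperm.nodup_iff.2 <|
        hS.nodup.append hp.support_nodup fun w hwS hwp => hpC w hwp (hCS.mem_iff.2 hwS)
    · refine hch₁.append (p.isChain_adj_support.append ?_ ?_) ?_
      · exact List.isChain_reverse.2 (hch₂.imp fun _ _ h => h.symm)
      · simp [p.getLast?_support, h₂l, hbx₁]
      · simp [h₁l, List.head?_append, p.head?_support, hx₂a]
    · simp [h₁h, h₂h, List.getLast?_append, List.head?_append, p.getLast?_support, hσ.symm]
  have := hC.length_le hcyc
  simp [hCS.perm.length_eq] at this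

end Rerouting

section Finite

variable [Fintype V]

theorem exists_isLongestCycleList (h : ∃ l, G.IsCycleList l) : ∃ C, G.IsLongestCycleList C :=
  let ⟨C, hC, hmax⟩ := List.exists_forall_length_le h fun _ hl => hl.nodup
  ⟨C, hC, hmax _⟩

theorem exists_isChain_forall_adj_mem [Nonempty V] :
    ∃ Q a, (Q ++ [a]).Nodup ∧ (Q ++ [a]).IsChain G.Adj ∧ ∀ b, G.Adj a b → b ∈ Q := by
  obtain ⟨v⟩ := ‹Nonempty V›
  obtain ⟨P, ⟨hPnd, hPch⟩, hPmax⟩ := List.exists_forall_length_le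
    (p := fun l => l.Nodup ∧ l.IsChain G.Adj) ⟨[v], by simp⟩ fun l hl => hl.1
  rcases List.eq_nil_or_concat' P with rfl | ⟨Q, a, rfl⟩
  · simpa using hPmax [v] (by simp)
  refine ⟨Q, a, hPnd, hPch, fun b hab => ?_⟩
  by_contra hbQ
  have hb : b ∉ Q ++ [a] := by simpa [hbQ] using hab.ne.symm
  have := hPmax (Q ++ [a] ++ [b]) ⟨hPnd.append (List.nodup_singleton b) (by simpa using hb),
    hPch.append (List.isChain_singleton b) (by simpa using hab)⟩
  simp at this

theorem exists_finset_component {S : Set V} {v : V} (hv : v ∈ S) :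
    ∃ H : Finset V, v ∈ H ∧ (∀ u ∈ H, u ∈ S) ∧ (∀ u ∈ H, ∀ w ∈ S, G.Adj u w → w ∈ H) ∧
      ∀ a ∈ H, ∀ b ∈ H, ∃ p : G.Walk a b, p.IsPath ∧ ∀ w ∈ p.support, w ∈ S := by
  classical
  refine ⟨univ.filter fun u => ∃ hu : u ∈ S, (G.induce S).Reachable ⟨v, hv⟩ ⟨u, hu⟩,
    by simp [hv], fun u hu => (mem_filter.1 hu).2.1, fun u hu w hw huw => ?_, fun a ha b hb => ?_⟩
  · obtain ⟨hu, hr⟩ := (mem_filter.1 hu).2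
    have huw' : (G.induce S).Adj ⟨u, hu⟩ ⟨w, hw⟩ := induce_adj.2 huw
    exact mem_filter.2 ⟨mem_univ _, hw, hr.trans huw'.reachable⟩
  · obtain ⟨ha, hra⟩ := (mem_filter.1 ha).2
    obtain ⟨hb, hrb⟩ := (mem_filter.1 hb).2
    obtain ⟨q, hq⟩ := (hra.symm.trans hrb).exists_isPath
    let p : G.Walk a b := q.map (Embedding.induce S).toHom
    refine ⟨p, hq.map (Embedding.induce (G := G) S).injective, fun w hw => ?_⟩
    obtain ⟨x, -, rfl⟩ := List.mem_map.1 (Walk.support_map _ q ▸ hw)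
    exact x.2

variable [DecidableEq V]

theorem IsCycleList.isHamiltonian {C : List V} (hC : G.IsCycleList C) (hall : ∀ v, v ∈ C) :
    G.IsHamiltonian := by
  intro _
  obtain ⟨hch, hclose⟩ := Cycle.chain_coe_iff.1 hC.chain
  have hlen := hC.three_le_length
  obtain ⟨y, m, rfl⟩ := List.exists_cons_of_length_pos (by omega : 0 < C.length)
  have hlast : G.Adj ((y :: m).getLast (List.cons_ne_nil y m)) y :=
    hclose _ (List.getLast?_eq_some_getLast _) y rfl
  let p : G.Walk y _ := Walk.ofSupport (y :: m) (List.cons_ne_nil y m) hch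
  have hsupp : p.support = y :: m := Walk.support_ofSupport _ _
  have hplen : p.length = m.length := by
    simpa [Walk.length_support] using congrArg List.length hsupp
  have hcyc : (p.append hlast.toWalk).IsCycle := by
    refine (p.isPath_def.2 (by rw [hsupp]; exact hC.nodup)).isCycle_append (by simp [hlast.ne])
      ?_ (Or.inl ?_)
    · simpa [hsupp] using (List.nodup_cons.1 hC.nodup).1
    · simp at hlen
      omega
  refine ⟨y, _, Walk.isHamiltonianCycle_iff_isCycle_and_length_eq.2 ⟨hcyc, ?_⟩⟩
  have hcard : (y :: m).toFinset = univ := eq_univ_iff_forall.2 fun v => by simpa using hall v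
  rw [← card_univ, ← hcard, List.toFinset_card_of_nodup hC.nodup, Walk.length_append]
  simp [hplen]

variable [DecidableRel G.Adj]

theorem exists_isCycleList_minDegree_lt_length [Nonempty V] (hδ : 2 ≤ G.minDegree) :
    ∃ l, G.IsCycleList l ∧ G.minDegree < l.length := by
  obtain ⟨Q, a, hPnd, hPch, hnbr⟩ := G.exists_isChain_forall_adj_mem
  obtain ⟨u, hu⟩ : ∃ u, Q.find? (G.Adj a ·) = some u := by
    obtain ⟨b, hab⟩ := G.degree_pos_iff_exists_adj a |>.1 (by
      have := G.minDegree_le_degree a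
      omega)
    exact Option.isSome_iff_exists.1 (List.find?_isSome.2 ⟨b, hnbr b hab, by simpa using hab⟩)
  -- `u` is the first neighbour of `a` along the path, so `u :: T ++ [a]` carries all of them.
  obtain ⟨hau, R, T, rfl, hR⟩ := List.find?_eq_some_iff_append.1 hu
  have hdeg : G.minDegree ≤ (u :: T).length := calc
    G.minDegree ≤ G.degree a := G.minDegree_le_degree a
    _ ≤ #(u :: T).toFinset := by
      rw [← card_neighborFinset_eq_degree]
      refine card_le_card fun w hw => ?_
      have haw := (mem_neighborFinset _ _ _).1 hw
      have hwQ := hnbr w haw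
      simp only [List.mem_append] at hwQ
      exact List.mem_toFinset.2 (hwQ.resolve_left fun hwR => by simpa [haw] using hR w hwR)
    _ ≤ (u :: T).length := List.toFinset_card_le _
  rw [List.append_assoc] at hPnd hPch
  refine ⟨u :: T ++ [a], IsCycleList.of_isChain (by simp at hdeg ⊢; omega)
    (hPnd.sublist (List.sublist_append_right R _)) (List.isChain_append.1 hPch).2.1 ?_, ?_⟩
  · rw [List.getLast?_eq_some_iff.2 ⟨u :: T, rfl⟩]
    simpa using decide_eq_true_iff.1 hau
  · simp at hdeg ⊢
    omega

def vertexBoundary (G : SimpleGraph V) [DecidableRel G.Adj] (H : Finset V) : Finset V :=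
  H.biUnion (fun v => G.neighborFinset v) \ H

theorem mem_vertexBoundary {H : Finset V} {w : V} :
    w ∈ G.vertexBoundary H ↔ w ∉ H ∧ ∃ h ∈ H, G.Adj h w := by
  simp [vertexBoundary, and_comm]

theorem minDegree_lt_card_add_card_vertexBoundary {H : Finset V} (hH : H.Nonempty) :
    G.minDegree < #H + #(G.vertexBoundary H) := by
  obtain ⟨v, hv⟩ := hH
  have hsub : G.neighborFinset v ⊆ H.erase v ∪ G.vertexBoundary H := fun w hw => by
    rw [mem_neighborFinset] at hw
    by_cases hwH : w ∈ H
    · exact mem_union_left _ (mem_erase.2 ⟨hw.ne', hwH⟩)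
    · exact mem_union_right _ (mem_vertexBoundary.2 ⟨hwH, v, hv, hw⟩)
  have := (card_le_card hsub).trans (card_union_le _ _)
  rw [card_neighborFinset_eq_degree, card_erase_of_mem hv] at this
  have := G.minDegree_le_degree v
  have := card_pos.2 ⟨v, hv⟩
  omega

theorem IsLongestCycleList.not_adj_of_mem_image_formPerm {C : List V}
    (hC : G.IsLongestCycleList C) {H : Finset V}
    (hH : ∀ a ∈ H, ∀ b ∈ H, ∃ p : G.Walk a b, p.IsPath ∧ ∀ w ∈ p.support, w ∉ C)
    (hNC : ∀ x ∈ G.vertexBoundary H, x ∈ C) {y z : V}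
    (hy : y ∈ (G.vertexBoundary H).image C.formPerm)
    (hz : z ∈ (G.vertexBoundary H).image C.formPerm ∪ H) : ¬ G.Adj y z := by
  obtain ⟨x₁, hx₁, rfl⟩ := mem_image.1 hy
  obtain ⟨-, h₁, hh₁, hh₁x⟩ := mem_vertexBoundary.1 hx₁
  rcases mem_union.1 hz with hz | hz
  · obtain ⟨x₂, hx₂, rfl⟩ := mem_image.1 hz
    obtain ⟨-, h₂, hh₂, hh₂x⟩ := mem_vertexBoundary.1 hx₂
    obtain ⟨p, hp, hpC⟩ := hH h₂ hh₂ h₁ hh₁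
    intro hσ
    exact hC.not_formPerm_adj_formPerm (hNC x₁ hx₁) (hNC x₂ hx₂) (by rintro rfl; exact hσ.ne rfl)
      p hp hpC hh₂x.symm hh₁x hσ
  · obtain ⟨p, hp, hpC⟩ := hH h₁ hh₁ z hz
    exact fun hyz => hC.not_adj_formPerm (hNC x₁ hx₁) p hp hpC hh₁x.symm hyz.symm

theorem HasCrossEdges.mem_of_isLongestCycleList (hP : G.HasCrossEdges s t) (hst : s ≤ t)
    (hδ : s + t ≤ G.minDegree + 1) {C : List V} (hC : G.IsLongestCycleList C)
    (hlen : G.minDegree < C.length) (v : V) : v ∈ C := by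
  by_contra hv
  obtain ⟨H, hvH, hHC, hHcl, hH⟩ := G.exists_finset_component (S := {w | w ∉ C}) hv
  set N := G.vertexBoundary H
  have hNC : ∀ x ∈ N, x ∈ C := fun x hx => by
    obtain ⟨hxH, h, hh, hhx⟩ := mem_vertexBoundary.1 hx
    by_contra hxC
    exact hxH (hHcl h hh x hxC hhx)
  have hcard : G.minDegree < #H + #N := G.minDegree_lt_card_add_card_vertexBoundary ⟨v, hvH⟩
  rcases le_or_gt s #N with hsN | hNs
  · have hYcard : #(N.image C.formPerm) = #N := card_image_of_injective _ C.formPerm.injective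
    have hYH : Disjoint (N.image C.formPerm) H := by
      refine Finset.disjoint_left.2 fun y hy hyH => ?_
      obtain ⟨x, hx, rfl⟩ := mem_image.1 hy
      exact hHC _ hyH (List.formPerm_apply_mem_of_mem (hNC x hx))
    obtain ⟨y, hy, z, hz, hyz⟩ := hP.exists_adj_of_subset subset_union_left (hYcard ▸ hsN)
      (by rw [card_union_of_disjoint hYH]; omega)
    exact hC.not_adj_of_mem_image_formPerm hH hNC hy hz hyz
  · have hCN : #(C.toFinset \ N) + #N = C.length := by
      rw [card_sdiff_add_card_eq_card fun x hx => List.mem_toFinset.2 (hNC x hx),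
        List.toFinset_card_of_nodup hC.isCycleList.nodup]
    have hHCN : Disjoint H (C.toFinset \ N) :=
      Finset.disjoint_left.2 fun a ha hb => hHC a ha (List.mem_toFinset.1 (mem_sdiff.1 hb).1)
    obtain ⟨a, ha, b, hb, hab⟩ := hP.exists_adj_of_le_card hHCN (by omega) (by omega)
    obtain ⟨hbC, hbN⟩ := mem_sdiff.1 hb
    exact hbN (mem_vertexBoundary.2 ⟨fun hbH => hHC b hbH (List.mem_toFinset.1 hbC), a, ha, hab⟩)

end Finite

end SimpleGraph

/-- McDiarmid–Yolov 2017: a graph on at least 3 vertices with `δ(G) ≥ α̃(G)` is hamiltonian. -/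
theorem stmt_1 {V : Type*} [Fintype V] [DecidableEq V] (G : SimpleGraph V) [DecidableRel G.Adj]
    (hcard : 3 ≤ Fintype.card V) (hdeg : bipIndepNum G ≤ G.minDegree) :
    G.IsHamiltonian := by
  obtain ⟨s, t, hs, ht, hst, hP⟩ := G.exists_hasCrossEdges_of_bipIndepNum
  wlog hle : s ≤ t generalizing s t
  · exact this t s ht hs (by omega) hP.symm (by omega)
  have : Nonempty V := Fintype.card_pos_iff.1 (by omega)
  obtain ⟨l₀, hl₀, hδl₀⟩ :=
    exists_isCycleList_minDegree_lt_length (hP.two_le_minDegree hs ht (by omega) hcard)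
  obtain ⟨C, hC⟩ := exists_isLongestCycleList ⟨l₀, hl₀⟩
  exact hC.isCycleList.isHamiltonian <|
    hP.mem_of_isLongestCycleList hle (by omega) hC (hδl₀.trans_le (hC.length_le hl₀))
end

section
/- Let G be a finite simple graph such that max{d_G(x), d_G(y)} ≥ α̃(G) + 1 for every pair of nonadjacent vertices x, y with d_G(x, y) = 2, where α̃(G) is the bipartite independence number of G. Let V* = {v ∈ V(G) : d_G(v) ≥ α̃(G) + 1}. Then every connected component of the induced subgraph G − V* is a clique (a complete induced subgraph). -/
open SimpleGraph

/-!
Two nonadjacent vertices with a common neighbour are at distance 2, so the degree condition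
forbids induced paths `x - u - w` with both ends outside `V*`. Hence adjacency in `G - V*` is
transitive on distinct vertices, and walking along any path shows that every two distinct
vertices of a component are adjacent.
-/

namespace SimpleGraph

variable {V : Type*} {G : SimpleGraph V}

lemma dist_eq_two_of_adj_of_adj_s14 {x u w : V} (hxu : G.Adj x u) (huw : G.Adj u w) (hxw : x ≠ w)
    (hnadj : ¬ G.Adj x w) : G.dist x w = 2 := by
  have h : G.edist x w = 2 := edist_eq_two_iff.mpr ⟨hxw, hnadj, u, hxu, huw.symm⟩
  simp [dist, h]

lemma Reachable.adj_of_ne_of_adj_trans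
    (htrans : ∀ ⦃x u w⦄, G.Adj x u → G.Adj u w → x ≠ w → G.Adj x w)
    {x y : V} (hxy : G.Reachable x y) (hne : x ≠ y) : G.Adj x y := by
  obtain ⟨p⟩ := hxy
  refine (?_ : x = y ∨ G.Adj x y).resolve_left hne
  clear hne
  induction p with
  | nil => exact .inl rfl
  | @cons x u y hxu _ ih =>
    rcases ih with rfl | huy
    · exact .inr hxu
    · by_cases hxy : x = y
      · exact .inl hxy
      · exact .inr (htrans hxu huy hxy)

end SimpleGraph

/-- Under the Fan-type condition, every connected component of `G - V*` is a clique, where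
`V* = {v : d(v) ≥ α̃(G) + 1}`. -/
theorem stmt_14 {V : Type*} [Fintype V] (G : SimpleGraph V) [DecidableRel G.Adj]
    (hdeg : ∀ x y : V, ¬ G.Adj x y → G.dist x y = 2 →
      bipIndepNum G + 1 ≤ max (G.degree x) (G.degree y)) :
    ∀ x y : ↥({v : V | bipIndepNum G + 1 ≤ G.degree v}ᶜ),
      (G.induce ({v : V | bipIndepNum G + 1 ≤ G.degree v}ᶜ)).Reachable x y → x ≠ y →
        (G.induce ({v : V | bipIndepNum G + 1 ≤ G.degree v}ᶜ)).Adj x y := by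
  refine fun x y hxy hne ↦ hxy.adj_of_ne_of_adj_trans ?_ hne
  rintro ⟨a, ha⟩ ⟨b, _⟩ ⟨c, hc⟩ hab hbc hac
  by_contra hnadj
  have hmax := hdeg a c hnadj (dist_eq_two_of_adj_of_adj_s14 hab hbc (hac <| Subtype.ext ·) hnadj)
  exact absurd hmax (not_le.mpr (max_lt (not_le.mp ha) (not_le.mp hc)))
end

section
/- Let G be a finite simple graph such that max{d_G(x), d_G(y)} ≥ α̃(G) + 1 for every pair of nonadjacent vertices x, y with d_G(x, y) = 2, where α̃(G) is the bipartite independence number of G. Let V* = {v ∈ V(G) : d_G(v) ≥ α̃(G) + 1}. If x and y are vertices lying in two distinct connected components of G − V*, then x and y have no common neighbor in G; in particular, N_G(x) ∩ N_G(y) ∩ V* = ∅. -/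
open SimpleGraph

/-!
Two vertices of `G - V*` with a common neighbor are at distance exactly 2 unless they are equal
or adjacent, and both of those would put them in the same component of `G - V*`. At distance 2
the degree condition forces one of them into `V*`, which is impossible.
-/

namespace SimpleGraph

variable {V : Type*} (G : SimpleGraph V)

lemma dist_eq_two_of_commonNeighbors_nonempty {u v : V} (hne : u ≠ v) (hnadj : ¬ G.Adj u v)
    (h : (G.commonNeighbors u v).Nonempty) : G.dist u v = 2 := by
  rw [dist, edist_eq_two_iff.mpr ⟨hne, hnadj, h⟩]
  rfl

lemma ne_and_not_adj_of_not_reachable_induce {s : Set V} {u v : s}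
    (h : ¬ (G.induce s).Reachable u v) : (u : V) ≠ v ∧ ¬ G.Adj u v :=
  ⟨fun huv ↦ h (Subtype.ext huv ▸ Reachable.refl u), fun hadj ↦ h (Adj.reachable hadj)⟩

lemma commonNeighbors_eq_empty_of_not_reachable_induce_lowDegree [Fintype V] [DecidableRel G.Adj]
    (k : ℕ) (hdeg : ∀ x y : V, ¬ G.Adj x y → G.dist x y = 2 → k ≤ max (G.degree x) (G.degree y))
    {x y : V} (hx : x ∈ ({v : V | k ≤ G.degree v}ᶜ : Set V))
    (hy : y ∈ ({v : V | k ≤ G.degree v}ᶜ : Set V))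
    (hsep : ¬ (G.induce ({v : V | k ≤ G.degree v}ᶜ : Set V)).Reachable ⟨x, hx⟩ ⟨y, hy⟩) :
    G.commonNeighbors x y = ∅ := by
  by_contra hcommon
  obtain ⟨hne, hnadj⟩ := G.ne_and_not_adj_of_not_reachable_induce hsep
  have hdist := G.dist_eq_two_of_commonNeighbors_nonempty hne hnadj
    (Set.nonempty_iff_ne_empty.mpr hcommon)
  rcases le_max_iff.mp (hdeg x y hnadj hdist) with hxdeg | hydeg
  exacts [hx hxdeg, hy hydeg]

end SimpleGraph

/-- Under the Fan-type condition, vertices in distinct components of `G - V*` have no common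
neighbor in `G`, where `V* = {v : d(v) ≥ α̃(G) + 1}`. -/
theorem stmt_15 {V : Type*} [Fintype V] (G : SimpleGraph V) [DecidableRel G.Adj]
    (hdeg : ∀ x y : V, ¬ G.Adj x y → G.dist x y = 2 →
      bipIndepNum G + 1 ≤ max (G.degree x) (G.degree y))
    (x y : V) (hx : x ∈ ({v : V | bipIndepNum G + 1 ≤ G.degree v}ᶜ : Set V))
    (hy : y ∈ ({v : V | bipIndepNum G + 1 ≤ G.degree v}ᶜ : Set V))
    (hsep : ¬ (G.induce ({v : V | bipIndepNum G + 1 ≤ G.degree v}ᶜ : Set V)).Reachable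
      ⟨x, hx⟩ ⟨y, hy⟩) :
    G.neighborSet x ∩ G.neighborSet y = ∅ :=
  G.commonNeighbors_eq_empty_of_not_reachable_induce_lowDegree _ hdeg hx hy hsep
end

section
/- Let G be a finite simple graph such that max{d_G(x), d_G(y)} ≥ α̃(G) + 1 for every pair of nonadjacent vertices x, y with d_G(x, y) = 2, where α̃(G) is the bipartite independence number of G. Let u and v be nonadjacent vertices of G with min{d_G(u), d_G(v)} ≥ α̃(G) + 1, and let G' = G + uv be the graph obtained from G by adding the edge uv. Then max{d_{G'}(x), d_{G'}(y)} ≥ α̃(G') + 1 for every pair of vertices x, y that are nonadjacent in G' with d_{G'}(x, y) = 2. -/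
open SimpleGraph

/-!
Adding an edge can only lower `α̃` and raise degrees, so it suffices to find the bound in `G`.
A pair at distance two in `G + uv` either contains `u` or `v`, whose degrees already exceed
`α̃(G)`, or avoids both; then its adjacency and common neighbours are the same in `G`, so it is
a nonadjacent pair at distance two in `G` and the hypothesis on `G` applies.
-/

namespace SimpleGraph

variable {V : Type*}

lemma dist_eq_two_iff {G : SimpleGraph V} {x y : V} :
    G.dist x y = 2 ↔ x ≠ y ∧ ¬ G.Adj x y ∧ (G.commonNeighbors x y).Nonempty := by
  rw [dist, ENat.toNat_eq_iff two_ne_zero, Nat.cast_ofNat, edist_eq_two_iff]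

section AddEdge

variable (G : SimpleGraph V) {u v x : V}

lemma sup_edge_adj_iff_of_ne (hu : x ≠ u) (hv : x ≠ v) (w : V) :
    (G ⊔ edge u v).Adj x w ↔ G.Adj x w := by
  simp [edge_adj, hu, hv]

lemma commonNeighbors_sup_edge_of_ne {y : V} (hxu : x ≠ u) (hxv : x ≠ v) (hyu : y ≠ u)
    (hyv : y ≠ v) : (G ⊔ edge u v).commonNeighbors x y = G.commonNeighbors x y := by
  ext w
  simp only [mem_commonNeighbors, sup_edge_adj_iff_of_ne G hxu hxv,
    sup_edge_adj_iff_of_ne G hyu hyv]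

lemma dist_eq_two_of_sup_edge {y : V} (hxu : x ≠ u) (hxv : x ≠ v) (hyu : y ≠ u)
    (hyv : y ≠ v) (h : (G ⊔ edge u v).dist x y = 2) : G.dist x y = 2 := by
  rw [dist_eq_two_iff, sup_edge_adj_iff_of_ne G hxu hxv,
    commonNeighbors_sup_edge_of_ne G hxu hxv hyu hyv] at h
  exact dist_eq_two_iff.mpr h

end AddEdge

variable [Fintype V]

lemma exists_bipIndepNum_witness (G : SimpleGraph V) :
    ∃ s t : ℕ, 0 < s ∧ 0 < t ∧ s + t = bipIndepNum G + 1 ∧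
      ∀ A B : Finset V, Disjoint A B → A.card = s → B.card = t →
        ∃ a ∈ A, ∃ b ∈ B, G.Adj a b := by
  let bounds : Set ℕ := {q | ∃ s t : ℕ, 0 < s ∧ 0 < t ∧ s + t = q + 1 ∧
    ∀ A B : Finset V, Disjoint A B → A.card = s → B.card = t → ∃ a ∈ A, ∃ b ∈ B, G.Adj a b}
  refine Nat.sInf_mem (s := bounds) ⟨Fintype.card V + 1, 1, Fintype.card V + 1, one_pos,
    Nat.succ_pos _, by ring, fun A B _ _ hB => ?_⟩
  have := B.card_le_univ
  omega

lemma bipIndepNum_anti {G H : SimpleGraph V} (h : G ≤ H) : bipIndepNum H ≤ bipIndepNum G := by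
  obtain ⟨s, t, hs, ht, hst, hedge⟩ := exists_bipIndepNum_witness G
  refine Nat.sInf_le ⟨s, t, hs, ht, hst, fun A B hAB hA hB => ?_⟩
  obtain ⟨a, ha, b, hb, hab⟩ := hedge A B hAB hA hB
  exact ⟨a, ha, b, hb, h hab⟩

end SimpleGraph

theorem stmt_16_general {V : Type*} [Fintype V] [DecidableEq V] (G : SimpleGraph V) [DecidableRel G.Adj]
    (hdeg : ∀ x y : V, ¬ G.Adj x y → G.dist x y = 2 →
      bipIndepNum G + 1 ≤ max (G.degree x) (G.degree y))
    (u v : V)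
    (hu : bipIndepNum G + 1 ≤ G.degree u) (hv : bipIndepNum G + 1 ≤ G.degree v) :
    ∀ x y : V, ¬ (G ⊔ edge u v).Adj x y → (G ⊔ edge u v).dist x y = 2 →
      bipIndepNum (G ⊔ edge u v) + 1 ≤
        max ((G ⊔ edge u v).degree x) ((G ⊔ edge u v).degree y) := by
  intro x y hxy hdist
  have hle : G ≤ G ⊔ edge u v := le_sup_left
  suffices h : bipIndepNum G + 1 ≤ max (G.degree x) (G.degree y) by
    calc bipIndepNum (G ⊔ edge u v) + 1 ≤ bipIndepNum G + 1 := by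
          gcongr; exact bipIndepNum_anti hle
      _ ≤ max (G.degree x) (G.degree y) := h
      _ ≤ _ := max_le_max (degree_le_of_le hle) (degree_le_of_le hle)
  by_cases hxy_uv : x = u ∨ x = v ∨ y = u ∨ y = v
  · rcases hxy_uv with rfl | rfl | rfl | rfl
    exacts [le_max_of_le_left hu, le_max_of_le_left hv, le_max_of_le_right hu,
      le_max_of_le_right hv]
  push Not at hxy_uv
  obtain ⟨hxu, hxv, hyu, hyv⟩ := hxy_uv
  exact hdeg x y (fun h => hxy (hle h)) (dist_eq_two_of_sup_edge G hxu hxv hyu hyv hdist)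

/-- Adding an edge between two nonadjacent vertices of degree at least `α̃(G) + 1` preserves
the Fan-type condition. -/
theorem stmt_16 {V : Type*} [Fintype V] [DecidableEq V] (G : SimpleGraph V) [DecidableRel G.Adj]
    (hdeg : ∀ x y : V, ¬ G.Adj x y → G.dist x y = 2 →
      bipIndepNum G + 1 ≤ max (G.degree x) (G.degree y))
    (u v : V) (hne : u ≠ v) (huv : ¬ G.Adj u v)
    (hu : bipIndepNum G + 1 ≤ G.degree u) (hv : bipIndepNum G + 1 ≤ G.degree v) :
    ∀ x y : V, ¬ (G ⊔ edge u v).Adj x y → (G ⊔ edge u v).dist x y = 2 →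
      bipIndepNum (G ⊔ edge u v) + 1 ≤
        max ((G ⊔ edge u v).degree x) ((G ⊔ edge u v).degree y) :=
  stmt_16_general G hdeg u v hu hv
end
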